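/- Let N ≥ 2, c > 0, and let U : ℝ^d → [0, ∞) be a measurable function such that e^{−U} belongs to L¹(ℝ^d) ∩ L²(ℝ^d). Suppose the normalizing constant Z := ∫_{ℝ^{Nd}} exp(−c ∑_{1≤i<j≤N} V(x^i − x^j) − ∑_{i=1}^N U(x^i)) dx^1⋯dx^N satisfies 0 < Z < ∞, and let ρ be the Gibbs probability density ρ(x^1, …, x^N) = Z^{−1} exp(−c ∑_{i<j} V(x^i − x^j) − ∑_i U(x^i)) on ℝ^{Nd}. Then the expected total interaction energy is finite: ∫_{ℝ^{Nd}} ( ∑_{1≤i<j≤N} |V(x^i − x^j)| ) ρ(x^1, …, x^N) dx^1⋯dx^N < ∞. -/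

import Mathlib

open MeasureTheory Finset

/-- The Lennard-Jones potential `V(x) = A/|x|^α − B/|x|^β` on `ℝ^d` (real-power exponents). -/
noncomputable def LJpot (d : ℕ) (A B α β : ℝ) (x : EuclideanSpace ℝ (Fin d)) : ℝ :=
  A / ‖x‖ ^ α - B / ‖x‖ ^ β

lemma LJpot_lower_bound (d : ℕ) (A B α β : ℝ) (hA : 0 < A) (hB : 0 < B)
    (hβ : 0 ≤ β) (hβα : β < α) :
    ∃ M : ℝ, 0 < M ∧ ∀ x : EuclideanSpace ℝ (Fin d), -M ≤ LJpot d A B α β x := by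
  have hα : 0 < α := lt_of_le_of_lt hβ hβα
  set r₁ : ℝ := (A / B) ^ (1 / (α - β)) with hr₁def
  have hr₁ : 0 < r₁ := Real.rpow_pos_of_pos (div_pos hA hB) _
  have hr₁β : 0 < r₁ ^ β := Real.rpow_pos_of_pos hr₁ _
  refine ⟨B / r₁ ^ β + B + 1, by positivity, fun x => ?_⟩
  set r : ℝ := ‖x‖ with hrdef
  have hr0 : 0 ≤ r := norm_nonneg x
  rcases eq_or_lt_of_le hr0 with h0 | hr
  · -- r = 0
    rcases eq_or_lt_of_le hβ with hb0 | hb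
    · simp only [LJpot, ← hrdef, ← h0, ← hb0, Real.zero_rpow (ne_of_gt hα),
        Real.rpow_zero, div_zero, div_one, zero_sub]
      have : (0:ℝ) < B / r₁ ^ β := div_pos hB hr₁β
      linarith
    · simp only [LJpot, ← hrdef, ← h0, Real.zero_rpow (ne_of_gt hα),
        Real.zero_rpow (ne_of_gt hb), div_zero, sub_zero]
      have : (0:ℝ) < B / r₁ ^ β := div_pos hB hr₁β
      linarith
  · have hrα : 0 < r ^ α := Real.rpow_pos_of_pos hr _
    have hrβ : 0 < r ^ β := Real.rpow_pos_of_pos hr _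
    by_cases hcase : B / r ^ β ≤ A / r ^ α
    · have h : (0:ℝ) ≤ LJpot d A B α β x := by
        simp only [LJpot, ← hrdef]; linarith
      have : (0:ℝ) < B / r₁ ^ β := div_pos hB hr₁β
      linarith
    · push_neg at hcase
      have h1 : A * r ^ β < B * r ^ α := (div_lt_div_iff₀ hrα hrβ).1 hcase
      have h2 : A / B < r ^ (α - β) := by
        rw [Real.rpow_sub hr, div_lt_div_iff₀ hB hrβ]
        linarith
      have h3 : r₁ < r := by
        have h := Real.rpow_lt_rpow (le_of_lt (div_pos hA hB)) h2
          (one_div_pos.2 (show (0:ℝ) < α - β by linarith))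
        rwa [← Real.rpow_mul hr0, mul_one_div,
          div_self (by linarith : α - β ≠ 0), Real.rpow_one] at h
      have h4 : r₁ ^ β ≤ r ^ β := Real.rpow_le_rpow hr₁.le h3.le hβ
      have h5 : B / r ^ β ≤ B / r₁ ^ β := by gcongr
      have h6 : 0 ≤ A / r ^ α := by positivity
      simp only [LJpot, ← hrdef]
      linarith

/-- for the confined Gibbs measure
`ρ(x¹,…,x^N) = Z⁻¹ exp(−c ∑_{i<j} V(xⁱ−xʲ) − ∑ᵢ U(xⁱ))` with `0 < Z < ∞`, the expected
total pairwise interaction energy `∫ (∑_{i<j} |V(xⁱ−xʲ)|) ρ dx < ∞`. -/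
theorem LJpot_gibbs_total_energy_finite (d N : ℕ) (hd : 1 ≤ d) (hN : 2 ≤ N)
    (A B α β c : ℝ)
    (hA : 0 < A) (hB : 0 < B) (hβ : 0 ≤ β) (hβα : β < α) (hα : 0 < α) (hc : 0 < c)
    (U : EuclideanSpace ℝ (Fin d) → ℝ)
    (hUmeas : Measurable U) (hUnn : ∀ x, 0 ≤ U x)
    (hU1 : Integrable (fun x => Real.exp (-U x)))
    (hU2 : MemLp (fun x => Real.exp (-U x)) 2)
    (Z : ℝ)
    (hZint : Integrable (fun x : Fin N → EuclideanSpace ℝ (Fin d) =>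
      Real.exp (-(c * ∑ i : Fin N, ∑ j ∈ univ.filter (fun j => i < j),
          LJpot d A B α β (x i - x j) + ∑ i : Fin N, U (x i)))))
    (hZ : Z = ∫ x : Fin N → EuclideanSpace ℝ (Fin d),
      Real.exp (-(c * ∑ i : Fin N, ∑ j ∈ univ.filter (fun j => i < j),
          LJpot d A B α β (x i - x j) + ∑ i : Fin N, U (x i))))
    (hZpos : 0 < Z) :
    ∫⁻ x : Fin N → EuclideanSpace ℝ (Fin d),
      ENNReal.ofReal ((∑ i : Fin N, ∑ j ∈ univ.filter (fun j => i < j),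
          |LJpot d A B α β (x i - x j)|) *
        (Z⁻¹ * Real.exp (-(c * ∑ i : Fin N, ∑ j ∈ univ.filter (fun j => i < j),
            LJpot d A B α β (x i - x j) + ∑ i : Fin N, U (x i))))) < ⊤ := by
  obtain ⟨M, hM, hVlb⟩ := LJpot_lower_bound d A B α β hA hB hβ hβα
  set n : ℝ := ∑ i : Fin N, ((univ.filter (fun j => i < j)).card : ℝ) with hndef
  have hn : 0 ≤ n := Finset.sum_nonneg fun i _ => Nat.cast_nonneg _
  have hnM : 0 ≤ n * M := mul_nonneg hn hM.le
  set C : ℝ := (1 / c + n * M) * Real.exp (c * (n * M)) with hCdef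
  have hC : 0 < C := mul_pos (add_pos_of_pos_of_nonneg (one_div_pos.2 hc) hnM) (Real.exp_pos _)
  set K : ℝ := Z⁻¹ * C with hKdef
  have hg : Integrable (fun x : Fin N → EuclideanSpace ℝ (Fin d) =>
      K * ∏ i, Real.exp (-U (x i))) :=
    (Integrable.fintype_prod (fun _ : Fin N => hU1)).const_mul K
  refine lt_of_le_of_lt (lintegral_mono fun x => ?_) hg.hasFiniteIntegral
  refine le_trans (ENNReal.ofReal_le_ofReal ?_) (Real.ofReal_le_enorm _)
  set S := ∑ i : Fin N, ∑ j ∈ univ.filter (fun j => i < j),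
    LJpot d A B α β (x i - x j) with hSdef
  set F := ∑ i : Fin N, ∑ j ∈ univ.filter (fun j => i < j),
    |LJpot d A B α β (x i - x j)| with hFdef
  set T := ∑ i : Fin N, U (x i) with hTdef
  have hT : 0 ≤ T := Finset.sum_nonneg fun i _ => hUnn _
  have hF : 0 ≤ F := Finset.sum_nonneg fun i _ =>
    Finset.sum_nonneg fun j _ => abs_nonneg _
  have hSlb : -(n * M) ≤ S := by
    have h : ∑ i : Fin N, ∑ _j ∈ univ.filter (fun j => i < j), (-M) ≤ S :=
      Finset.sum_le_sum fun i _ => Finset.sum_le_sum fun j _ => hVlb (x i - x j)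
    calc -(n * M) = ∑ i : Fin N, ∑ _j ∈ univ.filter (fun j => i < j), (-M) := by
          simp only [Finset.sum_const, nsmul_eq_mul, hndef]
          rw [← Finset.sum_mul]; ring
      _ ≤ S := h
  have hFle : F ≤ S + 2 * (n * M) := by
    have h : F ≤ ∑ i : Fin N, ∑ j ∈ univ.filter (fun j => i < j),
        (LJpot d A B α β (x i - x j) + 2 * M) :=
      Finset.sum_le_sum fun i _ => Finset.sum_le_sum fun j _ =>
        abs_le.2 ⟨by linarith [hVlb (x i - x j)], by linarith [hM.le]⟩
    calc F ≤ _ := h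
      _ = S + 2 * (n * M) := by
          simp only [Finset.sum_add_distrib, Finset.sum_const, nsmul_eq_mul, ← hSdef]
          rw [← Finset.sum_mul]; ring
  have hu0 : 0 ≤ S + n * M := by linarith
  set u : ℝ := S + n * M with hudef
  have hkey : F * Real.exp (-(c * S)) ≤ C := by
    have e1 : F * Real.exp (-(c * S)) ≤ (S + 2 * (n * M)) * Real.exp (-(c * S)) :=
      mul_le_mul_of_nonneg_right hFle (Real.exp_pos _).le
    have hrw : (S + 2 * (n * M)) * Real.exp (-(c * S))
        = (u + n * M) * Real.exp (-(c * u)) * Real.exp (c * (n * M)) := by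
      have h : -(c * u) + c * (n * M) = -(c * S) := by rw [hudef]; ring
      rw [mul_assoc, ← Real.exp_add, h, hudef]; ring
    have h1 : c * u ≤ Real.exp (c * u) := by linarith [Real.add_one_le_exp (c * u)]
    have hE : (0:ℝ) < Real.exp (c * u) := Real.exp_pos _
    have h2 : u * Real.exp (-(c * u)) ≤ 1 / c := by
      have h3 : c * u * (Real.exp (c * u))⁻¹ ≤ Real.exp (c * u) * (Real.exp (c * u))⁻¹ :=
        mul_le_mul_of_nonneg_right h1 (inv_nonneg.2 hE.le)
      rw [mul_inv_cancel₀ hE.ne'] at h3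
      rw [Real.exp_neg, le_div_iff₀ hc]
      linarith [h3]
    have h4 : Real.exp (-(c * u)) ≤ 1 :=
      Real.exp_le_one_iff.2 (neg_nonpos.2 (mul_nonneg hc.le hu0))
    calc F * Real.exp (-(c * S))
        ≤ (u + n * M) * Real.exp (-(c * u)) * Real.exp (c * (n * M)) := by
          rw [← hrw]; exact e1
      _ ≤ (1 / c + n * M) * Real.exp (c * (n * M)) := by
          have h5 : n * M * Real.exp (-(c * u)) ≤ n * M :=
            mul_le_of_le_one_right hnM h4
          have h6 : (u + n * M) * Real.exp (-(c * u)) ≤ 1 / c + n * M := by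
            calc (u + n * M) * Real.exp (-(c * u))
                = u * Real.exp (-(c * u)) + n * M * Real.exp (-(c * u)) := by ring
              _ ≤ 1 / c + n * M := add_le_add h2 h5
          exact mul_le_mul_of_nonneg_right h6 (Real.exp_pos _).le
      _ = C := rfl
  have hprod : ∏ i : Fin N, Real.exp (-U (x i)) = Real.exp (-T) := by
    rw [← Real.exp_sum, hTdef, ← Finset.sum_neg_distrib]
  have hexp : Real.exp (-(c * S + T)) = Real.exp (-(c * S)) * Real.exp (-T) := by
    rw [← Real.exp_add]; ring_nf
  calc F * (Z⁻¹ * Real.exp (-(c * S + T)))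
      = Z⁻¹ * (F * Real.exp (-(c * S)) * Real.exp (-T)) := by rw [hexp]; ring
    _ ≤ Z⁻¹ * (C * Real.exp (-T)) := by
        refine mul_le_mul_of_nonneg_left ?_ (inv_nonneg.2 hZpos.le)
        exact mul_le_mul_of_nonneg_right hkey (Real.exp_pos _).le
    _ = K * ∏ i : Fin N, Real.exp (-U (x i)) := by rw [hKdef, hprod]; ring
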